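/- Let 4 < q_1 < ... < q_m < 6, let Q_1,...,Q_m : ℝ^3 → ℝ be bounded with (i − i_0)Q_i(x) ≥ 0 for i ≠ i_0, and let a, b, c_i > 0. For u ∈ H^1(ℝ^3) with u ≠ 0, define f(t) = −t^2 A + Σ_i t^{q_i−2} B_i + t^4 C, where A = ∫ φ_u u^2 dx ≥ 0, B_i = ∫ Q_i(εx)|u|^{q_i} dx with B_i ≥ 0 for i > i_0, B_i ≤ 0 for i < i_0, and C = ∫ K(εx)|u|^6 dx ≥ 0. Then f is strictly increasing on any interval of t > 0 where f(t) > 0; consequently the equation f(t) = ‖u‖_ε^2 has at most one positive solution. -/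
import Mathlib


open Real Finset

noncomputable section

/-- The fibering auxiliary function `f(t) = -t²A + Σᵢ t^{qᵢ-2} Bᵢ + t⁴ C`
(with `A = ∫ φ_u u² ≥ 0`, `Bᵢ = ∫ Qᵢ(εx)|u|^{qᵢ}`, `C = ∫ K(εx)|u|⁶ ≥ 0`)
is strictly increasing on any interval of positive `t` where it is positive;
consequently `f(t) = N` has at most one positive solution for `N = ‖u‖_ε² > 0`. -/
theorem fibering_function_strict_mono_and_unique
    (m : ℕ) (i0 : Fin m) (q : Fin m → ℝ)
    (hq4 : ∀ i, 4 < q i) (hq6 : ∀ i, q i < 6) (hqmono : StrictMono q)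
    (A : ℝ) (hA : 0 ≤ A)
    (B : Fin m → ℝ) (hBpos : ∀ i, i0 < i → 0 ≤ B i) (hBneg : ∀ i, i < i0 → B i ≤ 0)
    (C : ℝ) (hC : 0 ≤ C) (N : ℝ) (hN : 0 < N)
    (f : ℝ → ℝ)
    (hf : ∀ t, f t = -t^2 * A + (∑ i : Fin m, t ^ (q i - 2) * B i) + t^4 * C) :
    (∀ s t : ℝ, 0 < s → s < t → (∀ r ∈ Set.Icc s t, 0 < f r) → f s < f t) ∧
    (∀ s t : ℝ, 0 < s → 0 < t → f s = N → f t = N → s = t) := by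
  set p : ℝ := q i0 - 2 with hp
  have hp2 : 2 < p := by have := hq4 i0; simp only [hp]; linarith
  have hp0 : 0 < p := by linarith
  have hp4 : p < 4 := by have := hq6 i0; simp only [hp]; linarith
  set g : ℝ → ℝ := fun t => -t ^ (2 - p) * A + (∑ i : Fin m, t ^ (q i - 2 - p) * B i)
      + t ^ (4 - p) * C with hg
  have hfg : ∀ t : ℝ, 0 < t → f t = t ^ p * g t := by
    intro t ht
    have h2 : t ^ p * t ^ (2 - p) = t ^ (2 : ℕ) := by
      rw [← rpow_add ht, show p + (2 - p) = ((2 : ℕ) : ℝ) by push_cast; ring, rpow_natCast]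
    have h4 : t ^ p * t ^ (4 - p) = t ^ (4 : ℕ) := by
      rw [← rpow_add ht, show p + (4 - p) = ((4 : ℕ) : ℝ) by push_cast; ring, rpow_natCast]
    have hqi : ∀ i : Fin m, t ^ p * t ^ (q i - 2 - p) = t ^ (q i - 2) := by
      intro i
      rw [← rpow_add ht, show p + (q i - 2 - p) = q i - 2 by ring]
    rw [hf, hg]
    simp only
    rw [mul_add, mul_add, Finset.mul_sum]
    congr 1
    · congr 1
      · rw [← h2]; ring
      · exact Finset.sum_congr rfl fun i _ => by rw [← hqi i]; ring
    · rw [← h4]; ring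
  have hgmono : ∀ s t : ℝ, 0 < s → s ≤ t → g s ≤ g t := by
    intro s t hs hst
    have ht : 0 < t := lt_of_lt_of_le hs hst
    simp only [hg]
    refine add_le_add (add_le_add ?_ ?_) ?_
    · have h1 : t ^ (2 - p) ≤ s ^ (2 - p) :=
        rpow_le_rpow_of_nonpos hs hst (by linarith)
      nlinarith
    · refine Finset.sum_le_sum fun i _ => ?_
      rcases lt_trichotomy i i0 with hi | hi | hi
      · have hB := hBneg i hi
        have he : q i - 2 - p ≤ 0 := by
          have := hqmono hi; simp only [hp]; linarith
        have h1 : t ^ (q i - 2 - p) ≤ s ^ (q i - 2 - p) :=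
          rpow_le_rpow_of_nonpos hs hst he
        nlinarith
      · subst hi
        rw [show q i - 2 - p = 0 by rw [hp]; ring, rpow_zero, rpow_zero]
      · have hB := hBpos i hi
        have he : 0 ≤ q i - 2 - p := by
          have := hqmono hi; simp only [hp]; linarith
        have h1 : s ^ (q i - 2 - p) ≤ t ^ (q i - 2 - p) :=
          rpow_le_rpow hs.le hst he
        nlinarith
    · have h1 : s ^ (4 - p) ≤ t ^ (4 - p) := rpow_le_rpow hs.le hst (by linarith)
      nlinarith
  have key : ∀ s t : ℝ, 0 < s → s < t → 0 < f s → f s < f t := by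
    intro s t hs hst hfs
    have ht : 0 < t := hs.trans hst
    have hsp : (0 : ℝ) < s ^ p := rpow_pos_of_pos hs p
    have htp : (0 : ℝ) < t ^ p := rpow_pos_of_pos ht p
    have hgs : 0 < g s := by
      rw [hfg s hs] at hfs
      nlinarith
    calc f s = s ^ p * g s := hfg s hs
      _ < t ^ p * g s := by
          exact mul_lt_mul_of_pos_right (rpow_lt_rpow hs.le hst hp0) hgs
      _ ≤ t ^ p * g t := mul_le_mul_of_nonneg_left (hgmono s t hs hst.le) htp.le
      _ = f t := (hfg t ht).symm
  constructor
  · intro s t hs hst hpos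
    exact key s t hs hst (hpos s ⟨le_refl s, hst.le⟩)
  · intro s t hs ht hfs hft
    by_contra hne
    rcases lt_or_gt_of_ne hne with h | h
    · have := key s t hs h (hfs ▸ hN)
      rw [hfs, hft] at this; exact lt_irrefl _ this
    · have := key t s ht h (hft ▸ hN)
      rw [hfs, hft] at this; exact lt_irrefl _ this
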